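/- arXiv:1104.1864 — 3 statements merged into one kernel-verified Lean document; each statement's English description precedes it below -/
import Mathlib

section
/- Let σ² > 0, 0 ≤ s < t, and set c(u) = σ²/(σ²+u). Then for all x, y ∈ ℝ, p(t - s, y | x) = c(s)^{1/2} c(t)^{1/2} · exp(x²/(2(σ²+s)) − y²/(2(σ²+t))) · p(σ² c(s) − σ² c(t), c(s) x | c(t) y), where p is the one-dimensional Gaussian heat kernel. -/
/-!
With `a = σ² + s` and `b = σ² + t` the new time is `τ = σ² c(s) - σ² c(t) = σ⁴ (b - a) / (a b)`.
The normalising constants match because `c(s) c(t) / τ = 1 / (b - a)`, and the Gaussian exponents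
match by expanding the square `(c(t) y - c(s) x)²`: the `x²` and `y²` terms are absorbed by the
factor `exp (x² / 2a - y² / 2b)`, leaving `-(x - y)² / 2 (b - a)`.
-/

open Real

/-- The one-dimensional Gaussian heat kernel `p(t, y | x)`. -/
noncomputable def heatKernel (t y x : ℝ) : ℝ :=
  (Real.sqrt (2 * π * t))⁻¹ * Real.exp (-(x - y) ^ 2 / (2 * t))

lemma mul_div_sub_mul_div_eq {σ2 a b : ℝ} (ha : a ≠ 0) (hb : b ≠ 0) :
    σ2 * (σ2 / a) - σ2 * (σ2 / b) = σ2 ^ 2 * (b - a) / (a * b) := by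
  field_simp

lemma sqrt_div_mul_sqrt_div_mul_inv_sqrt {σ2 a b : ℝ} (hσ : 0 < σ2) (ha : 0 < a) (hb : 0 < b) :
    √(σ2 / a) * √(σ2 / b) * (√(2 * π * (σ2 ^ 2 * (b - a) / (a * b))))⁻¹
      = (√(2 * π * (b - a)))⁻¹ := by
  rw [← sqrt_inv, ← sqrt_mul (by positivity), ← sqrt_mul (by positivity), ← sqrt_inv]
  congr 1
  field_simp

lemma sq_div_sub_sq_div_sub_sq_div {σ2 a b : ℝ} (hσ : σ2 ≠ 0) (ha : a ≠ 0) (hb : b ≠ 0)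
    (hab : b - a ≠ 0) (x y : ℝ) :
    x ^ 2 / (2 * a) - y ^ 2 / (2 * b)
        + -(σ2 / b * y - σ2 / a * x) ^ 2 / (2 * (σ2 ^ 2 * (b - a) / (a * b)))
      = -(x - y) ^ 2 / (2 * (b - a)) := by
  field_simp
  ring

theorem heatKernel_sub_eq_mul_heatKernel {σ2 a b : ℝ} (hσ : 0 < σ2) (ha : 0 < a) (hab : a < b)
    (x y : ℝ) :
    heatKernel (b - a) y x
      = √(σ2 / a) * √(σ2 / b) * exp (x ^ 2 / (2 * a) - y ^ 2 / (2 * b)) *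
        heatKernel (σ2 * (σ2 / a) - σ2 * (σ2 / b)) (σ2 / a * x) (σ2 / b * y) := by
  have hb : 0 < b := ha.trans hab
  rw [heatKernel, heatKernel, mul_div_sub_mul_div_eq ha.ne' hb.ne',
    ← sqrt_div_mul_sqrt_div_mul_inv_sqrt hσ ha hb,
    ← sq_div_sub_sq_div_sub_sq_div hσ.ne' ha.ne' hb.ne' (sub_pos.2 hab).ne' x y, exp_add]
  ring

/-- Time-reversal/dilatation identity for the Gaussian heat kernel:
`p(t-s, y|x) = c(s)^{1/2} c(t)^{1/2} e^{x²/2(σ²+s) - y²/2(σ²+t)}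
  p(σ²c(s) - σ²c(t), c(s)x | c(t)y)` where `c(u) = σ²/(σ²+u)`. -/
theorem heatKernel_time_reversal (σ2 : ℝ) (hσ : 0 < σ2) (s t : ℝ)
    (hs : 0 ≤ s) (hst : s < t) (x y : ℝ) :
    heatKernel (t - s) y x
      = Real.sqrt (σ2 / (σ2 + s)) * Real.sqrt (σ2 / (σ2 + t)) *
        Real.exp (x ^ 2 / (2 * (σ2 + s)) - y ^ 2 / (2 * (σ2 + t))) *
        heatKernel (σ2 * (σ2 / (σ2 + s)) - σ2 * (σ2 / (σ2 + t)))
          (σ2 / (σ2 + s) * x) (σ2 / (σ2 + t) * y) := by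
  have hts : t - s = (σ2 + t) - (σ2 + s) := by ring
  rw [hts]
  exact heatKernel_sub_eq_mul_heatKernel hσ (by linarith) (by linarith) x y
end

section
/- Let N ∈ ℕ, σ² > 0, and 0 < t_1 < ⋯ < t_M. Under the change of variables x^{(m)} ↦ c(t_m) x^{(m)} with c(u) = σ²/(σ²+u), the Gaussian determinantal transition factor satisfies f(t_{m+1} − t_m, x^{(m+1)} | x^{(m)}) = c(t_m)^{N/2} c(t_{m+1})^{N/2} exp(|x^{(m)}|²/(2(σ²+t_m)) − |x^{(m+1)}|²/(2(σ²+t_{m+1}))) · f(σ² c(t_m) − σ² c(t_{m+1}), c(t_m) x^{(m)} | c(t_{m+1}) x^{(m+1)}), where f(t, y | x) = det_{1≤j,k≤N}[p(t, y_j | x_k)] and p is the Gaussian heat kernel. -/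
open Real Finset

/-- The Karlin–McGregor determinantal transition factor
`f(t, y | x) = det [p(t, y_j | x_k)]`. -/
noncomputable def kmDet (N : ℕ) (t : ℝ) (y x : Fin N → ℝ) : ℝ :=
  Matrix.det (Matrix.of fun j k : Fin N => heatKernel t (y j) (x k))

/- The identity is entrywise: completing the square shows that dilating the two arguments of the
heat kernel by `α` and `β` and its time by `αβ` changes it only by the factor `√α √β` and a
Gaussian weight in each argument separately. Such row and column factors pull out of the
determinant as products; with `α = c(a)`, `β = c(b)` one has `αβ(b - a) = σ²c(a) - σ²c(b)`, and the
weights become `e^{u²/2(σ²+a)}` and `e^{-v²/2(σ²+b)}`. -/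

lemma heatKernel_eq_dilate {α β t : ℝ} (hα : 0 < α) (hβ : 0 < β) (ht : t ≠ 0) (u v : ℝ) :
    heatKernel t v u =
      √α * √β * exp (u ^ 2 * (α / β - 1) / (2 * t) + v ^ 2 * (β / α - 1) / (2 * t)) *
        heatKernel (α * β * t) (α * u) (β * v) := by
  have hsα : √α ≠ 0 := by positivity
  have hsβ : √β ≠ 0 := by positivity
  have hexp : exp (u ^ 2 * (α / β - 1) / (2 * t) + v ^ 2 * (β / α - 1) / (2 * t)) *
      exp (-(β * v - α * u) ^ 2 / (2 * (α * β * t))) = exp (-(u - v) ^ 2 / (2 * t)) := by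
    rw [← exp_add]
    congr 1
    field_simp
    ring
  unfold heatKernel
  rw [show 2 * π * (α * β * t) = α * (β * (2 * π * t)) by ring, sqrt_mul hα.le,
    sqrt_mul hβ.le, ← hexp]
  field_simp

lemma kmDet_eq_of_heatKernel_eq {N : ℕ} {t t' : ℝ} {r q φ ψ : ℝ → ℝ}
    (h : ∀ u v, heatKernel t v u = r u * q v * heatKernel t' (φ u) (ψ v)) (x y : Fin N → ℝ) :
    kmDet N t y x =
      (∏ k, r (x k)) * (∏ j, q (y j)) * kmDet N t' (fun k => φ (x k)) (fun j => ψ (y j)) := by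
  unfold kmDet
  rw [mul_assoc, ← Matrix.det_mul_row, ← Matrix.det_mul_column, ← Matrix.det_transpose]
  congr 1
  ext j k
  simp only [Matrix.transpose_apply, Matrix.of_apply, h, mul_assoc]

lemma prod_sqrt_mul_exp {N : ℕ} {c : ℝ} (hc : 0 ≤ c) (g : Fin N → ℝ) :
    ∏ j, √c * exp (g j) = c ^ ((N : ℝ) / 2) * exp (∑ j, g j) := by
  rw [prod_mul_distrib, prod_const, card_univ, Fintype.card_fin, ← exp_sum, sqrt_eq_rpow,
    ← rpow_natCast, ← rpow_mul hc, one_div_mul_eq_div]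

/-- Time-reversal/dilatation identity for the Gaussian determinantal factor:
with `c(u) = σ²/(σ²+u)` and `0 < a < b`,
`f(b-a, y | x) = c(a)^{N/2} c(b)^{N/2} e^{|x|²/2(σ²+a) - |y|²/2(σ²+b)}
  f(σ²c(a) - σ²c(b), c(a)x | c(b)y)`. -/
theorem kmDet_time_reversal (N : ℕ) (σ2 : ℝ) (hσ : 0 < σ2)
    (a b : ℝ) (ha : 0 < a) (hab : a < b) (x y : Fin N → ℝ) :
    kmDet N (b - a) y x
      = (σ2 / (σ2 + a)) ^ ((N : ℝ) / 2) * (σ2 / (σ2 + b)) ^ ((N : ℝ) / 2) *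
        Real.exp ((∑ j, x j ^ 2) / (2 * (σ2 + a)) - (∑ j, y j ^ 2) / (2 * (σ2 + b))) *
        kmDet N (σ2 * (σ2 / (σ2 + a)) - σ2 * (σ2 / (σ2 + b)))
          (fun j => σ2 / (σ2 + a) * x j) (fun k => σ2 / (σ2 + b) * y k) := by
  have hsa : 0 < σ2 + a := by linarith
  have hsb : 0 < σ2 + b := by linarith
  have hba : b - a ≠ 0 := by linarith
  have htime : σ2 / (σ2 + a) * (σ2 / (σ2 + b)) * (b - a) =
      σ2 * (σ2 / (σ2 + a)) - σ2 * (σ2 / (σ2 + b)) := by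
    field_simp
    ring
  have hentry (u v : ℝ) : heatKernel (b - a) v u =
      (√(σ2 / (σ2 + a)) * exp (u ^ 2 / (2 * (σ2 + a)))) *
        (√(σ2 / (σ2 + b)) * exp (-(v ^ 2 / (2 * (σ2 + b))))) *
        heatKernel (σ2 * (σ2 / (σ2 + a)) - σ2 * (σ2 / (σ2 + b)))
          (σ2 / (σ2 + a) * u) (σ2 / (σ2 + b) * v) := by
    rw [heatKernel_eq_dilate (α := σ2 / (σ2 + a)) (β := σ2 / (σ2 + b)) (by positivity)
      (by positivity) hba, htime, mul_mul_mul_comm, ← exp_add]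
    congr 4 <;>
    · field_simp
      ring
  rw [kmDet_eq_of_heatKernel_eq hentry, prod_sqrt_mul_exp (by positivity),
    prod_sqrt_mul_exp (by positivity), ← sum_div, sum_neg_distrib, ← sum_div, exp_neg,
    exp_sub]
  ring
end

section
/- For the Karlin–McGregor determinant with Gaussian kernel: for any t > 0 and x, y ∈ ℝ^N with x_1 < ⋯ < x_N and y_1 < ⋯ < y_N, the determinant f(t, y | x) = det_{1≤j,k≤N}[p(t, y_j | x_k)] is strictly positive. -/
open Real

/-!
Completing the square, `p(t, yⱼ | xₖ) = rⱼ cₖ e^{yⱼ xₖ / t}` with `rⱼ, cₖ > 0`, so it suffices that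
`det [e^{aⱼ bₖ}] > 0` for increasing `a` and `b`. This determinant never vanishes: a nonzero
exponential polynomial `∑ₖ cₖ e^{bₖ s}` with `n` terms has at most `n - 1` real zeros (divide by
`e^{b₀ s}`, differentiate, and use Rolle's theorem to induct on `n`). As the increasing `b` form a
convex set, the sign of the determinant is the one at `b = (0, 1, …, n - 1)`, where the matrix is
the Vandermonde matrix of the increasing nodes `e^{aⱼ}`.
-/

open Set Finset Matrix

theorem convex_setOf_strictMono {ι : Type*} [Preorder ι] :
    Convex ℝ {f : ι → ℝ | StrictMono f} := by
  intro f hf g hg θ μ hθ hμ hθμ i j hij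
  have hfij := hf hij
  have hgij := hg hij
  simp only [Pi.add_apply, Pi.smul_apply, smul_eq_mul]
  rcases hθ.eq_or_lt with rfl | hθ
  · simp_all
  · nlinarith [mul_lt_mul_of_pos_left hfij hθ, mul_le_mul_of_nonneg_left hgij.le hμ]

section

variable {n : ℕ}

theorem exists_strictMono_hasDerivAt_eq_zero {f f' : ℝ → ℝ}
    (hf : ∀ s, HasDerivAt f (f' s) s) {a : Fin (n + 1) → ℝ} (ha : StrictMono a)
    (hfa : ∀ j, f (a j) = 0) : ∃ ξ : Fin n → ℝ, StrictMono ξ ∧ ∀ j, f' (ξ j) = 0 := by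
  have hrolle (j : Fin n) : ∃ ξ ∈ Ioo (a j.castSucc) (a j.succ), f' ξ = 0 :=
    exists_hasDerivAt_eq_zero (ha j.castSucc_lt_succ)
      (fun s _ => (hf s).continuousAt.continuousWithinAt) (by rw [hfa, hfa]) fun s _ => hf s
  choose ξ hξ hf'ξ using hrolle
  refine ⟨ξ, fun i j hij => ?_, hf'ξ⟩
  calc ξ i < a i.succ := (hξ i).2
    _ ≤ a j.castSucc := ha.monotone (Fin.succ_le_castSucc_iff.2 hij)
    _ < ξ j := (hξ j).1

noncomputable def expSum (b c : Fin n → ℝ) (s : ℝ) : ℝ :=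
  ∑ k, c k * exp (b k * s)

theorem hasDerivAt_expSum (b c : Fin n → ℝ) (s : ℝ) :
    HasDerivAt (expSum b c) (expSum b (c * b) s) s := by
  refine (HasDerivAt.fun_sum fun k _ =>
    (((hasDerivAt_id s).const_mul (b k)).exp).const_mul (c k)).congr_deriv ?_
  refine Finset.sum_congr rfl fun k _ => ?_
  simp only [Pi.mul_apply, id, mul_one]
  ring

theorem expSum_sub_const (b c : Fin n → ℝ) (β s : ℝ) :
    expSum (fun k => b k - β) c s = exp (-(β * s)) * expSum b c s := by
  simp only [expSum, Finset.mul_sum]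
  refine Finset.sum_congr rfl fun k _ => ?_
  rw [mul_left_comm, ← exp_add]
  ring_nf

theorem expSum_succ (b c : Fin (n + 1) → ℝ) (s : ℝ) :
    expSum b c s = c 0 * exp (b 0 * s) + expSum (Fin.tail b) (Fin.tail c) s :=
  Fin.sum_univ_succ _

theorem eq_zero_of_expSum_eq_zero : ∀ {n : ℕ} {b c a : Fin n → ℝ}, StrictMono b →
    StrictMono a → (∀ j, expSum b c (a j) = 0) → c = 0
  | 0, _, c, _, _, _, _ => Subsingleton.elim c 0
  | n + 1, b, c, a, hb, ha, hc => by
    set d : Fin (n + 1) → ℝ := fun k => b k - b 0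
    have hd_pos (k : Fin n) : 0 < d k.succ := sub_pos.2 (hb k.succ_pos)
    obtain ⟨ξ, hξ, hdξ⟩ := exists_strictMono_hasDerivAt_eq_zero (hasDerivAt_expSum d c) ha
      fun j => by rw [expSum_sub_const, hc, mul_zero]
    have htail : Fin.tail (c * d) = 0 := by
      refine eq_zero_of_expSum_eq_zero (b := Fin.tail d) (fun i j hij => ?_) hξ fun j => ?_
      · simpa [Fin.tail, d] using hb (Fin.succ_lt_succ_iff.2 hij)
      · simpa [expSum_succ, d] using hdξ j
    have hc_succ (k : Fin n) : c k.succ = 0 := by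
      have := congrFun htail k
      simp only [Fin.tail, Pi.mul_apply, Pi.zero_apply] at this
      exact (mul_eq_zero.1 this).resolve_right (hd_pos k).ne'
    have hc0 : c 0 = 0 := by
      have := hc 0
      rw [expSum_succ, show Fin.tail c = 0 from funext hc_succ] at this
      simpa [expSum] using this
    funext k
    exact Fin.cases hc0 hc_succ k

theorem det_exp_mul_ne_zero {a b : Fin n → ℝ} (ha : StrictMono a) (hb : StrictMono b) :
    (of fun j k => exp (a j * b k)).det ≠ 0 := by
  intro hdet
  obtain ⟨c, hc_ne, hc⟩ := exists_mulVec_eq_zero_iff.2 hdet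
  refine hc_ne (eq_zero_of_expSum_eq_zero hb ha fun j => ?_)
  simpa [expSum, mulVec, dotProduct, mul_comm] using congrFun hc j

theorem det_exp_mul_natCast_pos {a : Fin n → ℝ} (ha : StrictMono a) :
    0 < (of fun j (k : Fin n) => exp (a j * k)).det := by
  have : (of fun j (k : Fin n) => exp (a j * k)) = vandermonde (exp ∘ a) := by
    ext j k
    simp [vandermonde, ← exp_nat_mul, mul_comm]
  rw [this, det_vandermonde]
  exact prod_pos fun i _ => prod_pos fun j hj =>
    sub_pos.2 (exp_strictMono.comp ha (Finset.mem_Ioi.1 hj))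

theorem det_exp_mul_pos {a b : Fin n → ℝ} (ha : StrictMono a) (hb : StrictMono b) :
    0 < (of fun j k => exp (a j * b k)).det := by
  have hD : Continuous fun b : Fin n → ℝ => (of fun j k => exp (a j * b k)).det := by fun_prop
  have hnat : StrictMono fun k : Fin n => (k : ℝ) := Nat.strictMono_cast.comp Fin.val_strictMono
  by_contra! hneg
  obtain ⟨b', hb', hD0⟩ := convex_setOf_strictMono.isPreconnected.intermediate_value hb hnat
    hD.continuousOn ⟨hneg, (det_exp_mul_natCast_pos ha).le⟩
  exact det_exp_mul_ne_zero ha hb' hD0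

end

theorem det_mul_column_mul_row {R n : Type*} [CommRing R] [Fintype n] [DecidableEq n]
    (r c : n → R) (A : Matrix n n R) :
    (of fun j k => r j * c k * A j k).det = (∏ j, r j) * (∏ k, c k) * A.det := by
  have h1 := det_mul_column r (of fun j k => c k * A j k)
  have h2 := det_mul_row c A
  simp only [of_apply] at h1
  simp only [mul_assoc, h1, h2]

theorem heatKernel_eq (t : ℝ) (ht : t ≠ 0) (y x : ℝ) :
    heatKernel t y x =
      (√(2 * π * t))⁻¹ * exp (-y ^ 2 / (2 * t)) * exp (-x ^ 2 / (2 * t)) * exp (y / t * x) := by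
  simp only [heatKernel, mul_assoc, ← exp_add]
  congr 2
  field_simp
  ring

/-- Total positivity of the Gaussian kernel: the Karlin–McGregor determinant
`f(t, y | x) = det [p(t, y_j | x_k)]` is strictly positive for strictly
increasing tuples `x`, `y` and `t > 0`. -/
theorem kmDet_pos (N : ℕ) (t : ℝ) (ht : 0 < t) (x y : Fin N → ℝ)
    (hx : StrictMono x) (hy : StrictMono y) :
    0 < Matrix.det (Matrix.of fun j k : Fin N => heatKernel t (y j) (x k)) := by
  have hy_t : StrictMono fun j => y j / t := fun i j hij => div_lt_div_of_pos_right (hy hij) ht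
  have hfactor : (of fun j k : Fin N => heatKernel t (y j) (x k)).det =
      (∏ j, (√(2 * π * t))⁻¹ * exp (-y j ^ 2 / (2 * t))) * (∏ k, exp (-x k ^ 2 / (2 * t))) *
        (of fun j k => exp (y j / t * x k)).det := by
    rw [← det_mul_column_mul_row]
    simp only [of_apply, heatKernel_eq t ht.ne']
  rw [hfactor]
  have := det_exp_mul_pos hy_t hx
  positivity
end
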